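/- For the quartic forms p_G(x) = Σ_{i∈V} x_i⁴ + 2 Σ_{{i,j}∈E} x_i² x_j² associated with a graph G = (V,E), the minimum of p_G over the unit sphere equals 1/α(G), where α(G) is the independence number of G (Motzkin–Straus). -/

import Mathlib

/-!
Substituting `y i = x i ^ 2` turns the problem into minimizing the quadratic form
`y ⬝ᵥ (1 + A) *ᵥ y` over the standard simplex, `A` the adjacency matrix. If the support of `y`
contains an edge `uv`, then `e_v - e_u` is isotropic for `1 + A`, so the form is affine along that
direction and moving all the mass of `u` onto `v`, or that of `v` onto `u`, does not increase it
while shrinking the support. Once the support is independent the cross terms vanish, and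
Cauchy–Schwarz gives `∑ y i ^ 2 ≥ 1 / #(support y) ≥ 1 / α`. The uniform distribution on a maximum
independent set attains the bound.
-/

open Finset Matrix

namespace Matrix

variable {ι : Type*} [Fintype ι]

theorem IsSymm.dotProduct_mulVec_add_smul {R : Type*} [CommRing R] {M : Matrix ι ι R}
    (hM : M.IsSymm) (x d : ι → R) (t : R) :
    (x + t • d) ⬝ᵥ M *ᵥ (x + t • d) =
      x ⬝ᵥ M *ᵥ x + 2 * t * (d ⬝ᵥ M *ᵥ x) + t ^ 2 * (d ⬝ᵥ M *ᵥ d) := by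
  have hxd : x ⬝ᵥ M *ᵥ d = d ⬝ᵥ M *ᵥ x := by
    rw [← dotProduct_transpose_mulVec, hM.eq]
  simp only [mulVec_add, mulVec_smul, add_dotProduct, dotProduct_add, smul_dotProduct,
    dotProduct_smul, hxd, smul_eq_mul]
  ring

theorem IsSymm.dotProduct_mulVec_add_smul_le_or {M : Matrix ι ι ℝ} (hM : M.IsSymm)
    (x : ι → ℝ) {d : ι → ℝ} (hd : d ⬝ᵥ M *ᵥ d = 0) {a b : ℝ} (ha : 0 ≤ a) (hb : 0 ≤ b) :
    (x + a • d) ⬝ᵥ M *ᵥ (x + a • d) ≤ x ⬝ᵥ M *ᵥ x ∨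
      (x + b • -d) ⬝ᵥ M *ᵥ (x + b • -d) ≤ x ⬝ᵥ M *ᵥ x := by
  rw [smul_neg, ← neg_smul, hM.dotProduct_mulVec_add_smul, hM.dotProduct_mulVec_add_smul, hd]
  rcases le_total (d ⬝ᵥ M *ᵥ x) 0 with h | h
  · left; nlinarith
  · right; nlinarith

theorem single_sub_single_dotProduct_mulVec {R : Type*} [CommRing R] [DecidableEq ι]
    (M : Matrix ι ι R) (u v : ι) :
    (Pi.single v 1 - Pi.single u 1) ⬝ᵥ M *ᵥ (Pi.single v 1 - Pi.single u 1) =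
      M v v - M v u - M u v + M u u := by
  simp only [mulVec_sub, sub_dotProduct, dotProduct_sub, mulVec_single_one, single_one_dotProduct,
    col_apply]
  ring

end Matrix

def moveMass {ι : Type*} [DecidableEq ι] (y : ι → ℝ) (u v : ι) : ι → ℝ :=
  y + y u • (Pi.single v 1 - Pi.single u 1)

section moveMass

variable {ι : Type*} [DecidableEq ι] (y : ι → ℝ) {u v : ι}

theorem moveMass_apply (huv : u ≠ v) (i : ι) :
    moveMass y u v i = if i = u then 0 else if i = v then y v + y u else y i := by
  by_cases hiu : i = u
  · subst hiu; simp [moveMass, huv]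
  · by_cases hiv : i = v
    · subst hiv; simp [moveMass, hiu]
    · simp [moveMass, hiu, hiv]

theorem moveMass_nonneg (hy : ∀ i, 0 ≤ y i) (huv : u ≠ v) (i : ι) : 0 ≤ moveMass y u v i := by
  rw [moveMass_apply y huv]
  split_ifs
  exacts [le_rfl, add_nonneg (hy v) (hy u), hy i]

variable [Fintype ι]

theorem sum_moveMass (u v : ι) : ∑ i, moveMass y u v i = ∑ i, y i := by
  simp [moveMass, sum_add_distrib, ← mul_sum]

theorem card_support_moveMass_lt (huv : u ≠ v) (hu : y u ≠ 0) (hv : y v ≠ 0) :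
    #{i | moveMass y u v i ≠ 0} < #{i | y i ≠ 0} := by
  refine card_lt_card <| (ssubset_iff_of_subset fun i hi => ?_).2
    ⟨u, by simpa, by simp [moveMass_apply y huv]⟩
  simp only [mem_filter, mem_univ, true_and, moveMass_apply y huv] at hi ⊢
  split_ifs at hi with hiu hiv
  exacts [(hi rfl).elim, hiv ▸ hv, hi]

end moveMass

theorem one_le_card_support_mul_sum_sq {ι : Type*} [Fintype ι] {y : ι → ℝ} (hy : ∑ i, y i = 1) :
    1 ≤ #{i | y i ≠ 0} * ∑ i, y i ^ 2 := by
  have hcs := sq_sum_le_card_mul_sum_sq (s := {i | y i ≠ 0}) (f := y)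
  rwa [sum_filter_ne_zero, hy, one_pow,
    sum_filter_of_ne fun i _ h => by simpa using h] at hcs

namespace SimpleGraph

variable {V : Type*} (G : SimpleGraph V)

theorem isIndepSet_iff_forall_not_adj {s : Set V} :
    G.IsIndepSet s ↔ ∀ i ∈ s, ∀ j ∈ s, ¬ G.Adj i j :=
  ⟨fun h _ hi _ hj hadj => h hi hj hadj.ne hadj, fun h _ hi _ hj _ => h _ hi _ hj⟩

theorem isGreatest_indepNum [Fintype V] :
    IsGreatest {k | ∃ s : Finset V, (∀ i ∈ s, ∀ j ∈ s, ¬ G.Adj i j) ∧ #s = k} G.indepNum := by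
  refine ⟨?_, fun _ ⟨s, hs, hk⟩ => hk ▸ ?_⟩
  · obtain ⟨s, hs⟩ := G.exists_isNIndepSet_indepNum
    exact ⟨s, by simpa using G.isIndepSet_iff_forall_not_adj.1 hs.isIndepSet, hs.card_eq⟩
  · exact (G.isIndepSet_iff_forall_not_adj.2 (by simpa using hs)).card_le_indepNum

variable [Fintype V] [DecidableEq V] [DecidableRel G.Adj]

theorem dotProduct_one_add_adjMatrix_mulVec (y : V → ℝ) :
    y ⬝ᵥ (1 + G.adjMatrix ℝ) *ᵥ y =
      ∑ i, y i ^ 2 + ∑ i, ∑ j, if G.Adj i j then y i * y j else 0 := by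
  rw [add_mulVec, one_mulVec, dotProduct_add, dotProduct_mulVec_adjMatrix]
  simp [dotProduct, sq]

theorem sum_sq_le_dotProduct_one_add_adjMatrix_mulVec {y : V → ℝ} (hy : ∀ i, 0 ≤ y i) :
    ∑ i, y i ^ 2 ≤ y ⬝ᵥ (1 + G.adjMatrix ℝ) *ᵥ y := by
  rw [dotProduct_one_add_adjMatrix_mulVec]
  refine le_add_of_nonneg_right (sum_nonneg fun i _ => sum_nonneg fun j _ => ?_)
  split_ifs
  exacts [mul_nonneg (hy i) (hy j), le_rfl]

theorem single_sub_single_dotProduct_one_add_adjMatrix_mulVec {u v : V} (h : G.Adj u v) :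
    (Pi.single v 1 - Pi.single u 1) ⬝ᵥ (1 + G.adjMatrix ℝ) *ᵥ (Pi.single v 1 - Pi.single u 1) =
      0 := by
  rw [single_sub_single_dotProduct_mulVec]
  simp [h, h.symm, h.ne, h.ne']

theorem one_div_indepNum_le_dotProduct_one_add_adjMatrix_mulVec {y : V → ℝ}
    (hy : y ∈ stdSimplex ℝ V) : 1 / (G.indepNum : ℝ) ≤ y ⬝ᵥ (1 + G.adjMatrix ℝ) *ᵥ y := by
  obtain ⟨hy0, hy1⟩ := hy
  induction hk : #{i | y i ≠ 0} using Nat.strong_induction_on generalizing y with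
  | _ k ih =>
  by_cases hind : G.IsIndepSet (({i | y i ≠ 0} : Finset V) : Set V)
  · have hQ := G.sum_sq_le_dotProduct_one_add_adjMatrix_mulVec hy0
    refine div_le_of_le_mul₀ (Nat.cast_nonneg _) ((sum_nonneg fun i _ => sq_nonneg _).trans hQ) ?_
    calc (1 : ℝ) ≤ #{i | y i ≠ 0} * ∑ i, y i ^ 2 := one_le_card_support_mul_sum_sq hy1
      _ ≤ G.indepNum * ∑ i, y i ^ 2 := by
        gcongr
        exact hind.card_le_indepNum
      _ ≤ _ := by
        rw [mul_comm]
        gcongr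
  · obtain ⟨u, hu, v, hv, huv, hadj⟩ : ∃ u, y u ≠ 0 ∧ ∃ v, y v ≠ 0 ∧ u ≠ v ∧ G.Adj u v := by
      simpa [isIndepSet_iff, Set.Pairwise] using hind
    have hM : (1 + G.adjMatrix ℝ).IsSymm := isSymm_one.add G.isSymm_adjMatrix
    rcases hM.dotProduct_mulVec_add_smul_le_or y
      (G.single_sub_single_dotProduct_one_add_adjMatrix_mulVec hadj) (hy0 u) (hy0 v) with h | h
    · exact (ih _ (hk ▸ card_support_moveMass_lt y huv hu hv) (moveMass_nonneg y hy0 huv)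
        (by rw [sum_moveMass, hy1]) rfl).trans h
    · rw [neg_sub] at h
      exact (ih _ (hk ▸ card_support_moveMass_lt y huv.symm hv hu)
        (moveMass_nonneg y hy0 huv.symm) (by rw [sum_moveMass, hy1]) rfl).trans h

theorem dotProduct_one_add_adjMatrix_mulVec_of_isIndepSet {s : Set V} (hs : G.IsIndepSet s)
    {y : V → ℝ} (hy : Function.support y ⊆ s) :
    y ⬝ᵥ (1 + G.adjMatrix ℝ) *ᵥ y = ∑ i, y i ^ 2 := by
  have hcross (i j : V) : (if G.Adj i j then y i * y j else 0) = 0 := by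
    by_cases hi : y i = 0
    · simp [hi]
    by_cases hj : y j = 0
    · simp [hj]
    exact if_neg fun h => hs (hy hi) (hy hj) h.ne h
  simp [dotProduct_one_add_adjMatrix_mulVec, hcross]

theorem isLeast_dotProduct_one_add_adjMatrix_mulVec [Nonempty V] :
    IsLeast ((fun y => y ⬝ᵥ (1 + G.adjMatrix ℝ) *ᵥ y) '' stdSimplex ℝ V) (1 / G.indepNum) := by
  refine ⟨?_, fun _ ⟨y, hy, hQ⟩ =>
    hQ ▸ G.one_div_indepNum_le_dotProduct_one_add_adjMatrix_mulVec hy⟩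
  obtain ⟨s, hs, hcard⟩ := G.exists_isNIndepSet_indepNum
  have hpos : (#s : ℝ) ≠ 0 := Nat.cast_ne_zero.2 <| ne_of_gt <| hcard ▸
    (show G.IsIndepSet ({Classical.arbitrary V} : Finset V) by simp).card_le_indepNum
  let y : V → ℝ := fun i => if i ∈ s then (#s : ℝ)⁻¹ else 0
  have hy : Function.support y ⊆ s := fun i hi => by_contra fun h => hi (if_neg h)
  refine ⟨y, ⟨fun i => ?_, ?_⟩, ?_⟩
  · dsimp only [y]
    split_ifs <;> positivity
  · simp [y, hpos]
  · simp [G.dotProduct_one_add_adjMatrix_mulVec_of_isIndepSet hs hy, y, ← hcard]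
    field_simp

end SimpleGraph

theorem image_sq_eq_stdSimplex {ι : Type*} [Fintype ι] :
    (fun x : ι → ℝ => fun i => x i ^ 2) '' {x | ∑ i, x i ^ 2 = 1} = stdSimplex ℝ ι := by
  ext y
  constructor
  · rintro ⟨x, hx, rfl⟩
    exact ⟨fun i => sq_nonneg _, hx⟩
  · rintro ⟨hy0, hy1⟩
    refine ⟨fun i => √(y i), ?_, funext fun i => Real.sq_sqrt (hy0 i)⟩
    simpa [Real.sq_sqrt (hy0 _)] using hy1

/-- Motzkin–Straus: the minimum of the quartic form
`p_G(x) = ∑ i, x i ^ 4 + ∑ i, ∑ j, (if G.Adj i j then x i ^ 2 * x j ^ 2 else 0)`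
(the double sum counts each edge twice, giving `2 ∑_{{i,j} ∈ E} x_i² x_j²`)
over the unit sphere equals `1 / α(G)` where `α(G)` is the independence number. -/
theorem motzkin_straus (n : ℕ) (hn : 1 ≤ n) (G : SimpleGraph (Fin n))
    [DecidableRel G.Adj] (α : ℕ)
    (hα : IsGreatest {k : ℕ | ∃ s : Finset (Fin n),
      (∀ i ∈ s, ∀ j ∈ s, ¬ G.Adj i j) ∧ s.card = k} α) :
    IsLeast {v : ℝ | ∃ x : Fin n → ℝ, (∑ i, (x i) ^ 2) = 1 ∧
      (∑ i, (x i) ^ 4) + (∑ i, ∑ j, if G.Adj i j then (x i) ^ 2 * (x j) ^ 2 else 0) = v}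
      (1 / (α : ℝ)) := by
  have : Nonempty (Fin n) := ⟨⟨0, hn⟩⟩
  obtain rfl := hα.unique G.isGreatest_indepNum
  have hp (x : Fin n → ℝ) :
      (∑ i, x i ^ 4) + (∑ i, ∑ j, if G.Adj i j then x i ^ 2 * x j ^ 2 else 0) =
        (fun i => x i ^ 2) ⬝ᵥ (1 + G.adjMatrix ℝ) *ᵥ (fun i => x i ^ 2) := by
    simp only [G.dotProduct_one_add_adjMatrix_mulVec, ← pow_mul]
  convert G.isLeast_dotProduct_one_add_adjMatrix_mulVec using 1
  rw [← image_sq_eq_stdSimplex, Set.image_image]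
  ext v
  simp [hp]
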